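/- Every subset A of an ij-weakly Lindelöf ij-semiregular bitopological space X that is both ij-regular closed and τ_j-open is ij-weakly Lindelöf relative to X. -/

import Mathlib

open Set Topology

universe u

variable {X : Type u}

/-- `X` with topologies `t1`, `t2` is ij-weakly Lindelöf: every `t1`-open cover admits a
countable subfamily whose union is `t2`-dense. -/
def IjWeaklyLindelof (t1 t2 : TopologicalSpace X) : Prop :=
  ∀ {ι : Type u} (U : ι → Set X), (∀ a, IsOpen[t1] (U a)) → (⋃ a, U a) = Set.univ →
    ∃ s : Set ι, s.Countable ∧ @closure X t2 (⋃ a ∈ s, U a) = Set.univ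

/-- `S` is ij-regular open: `S = i-int(j-cl(S))`. -/
def IjRegularOpen (t1 t2 : TopologicalSpace X) (S : Set X) : Prop :=
  @interior X t1 (@closure X t2 S) = S

/-- `S` is ij-regular closed: `S = i-cl(j-int(S))`. -/
def IjRegularClosed (t1 t2 : TopologicalSpace X) (S : Set X) : Prop :=
  @closure X t1 (@interior X t2 S) = S

/-- `S` is ij-weakly Lindelöf relative to `X`. -/
def IjRelWeaklyLindelof (t1 t2 : TopologicalSpace X) (S : Set X) : Prop :=
  ∀ {ι : Type u} (U : ι → Set X), (∀ a, IsOpen[t1] (U a)) → S ⊆ ⋃ a, U a →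
    ∃ s : Set ι, s.Countable ∧ S ⊆ @closure X t2 (⋃ a ∈ s, U a)

/-- `X` is ij-semiregular (every `t1`-open set is a union of ij-regular open sets). -/
def IjSemiregular (t1 t2 : TopologicalSpace X) : Prop :=
  ∀ V : Set X, IsOpen[t1] V →
    ∃ 𝒮 : Set (Set X), (∀ S ∈ 𝒮, IjRegularOpen t1 t2 S) ∧ V = ⋃₀ 𝒮

/-!
Since `A` is `τ₂`-open, `A = τ₁-cl (τ₂-int A) = τ₁-cl A`, so `A` is `τ₁`-closed. A `τ₁`-open cover
of `A` together with `Aᶜ` then covers `X`, and a countable subfamily with `τ₂`-dense union is dense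
in the `τ₂`-open set `A`; only its members from the original cover meet `A`.
-/

theorem IjRegularClosed.isClosed_of_isOpen {t1 t2 : TopologicalSpace X} {A : Set X}
    (hA : IjRegularClosed t1 t2 A) (hA₂ : IsOpen[t2] A) : IsClosed[t1] A := by
  rw [← hA, hA₂.interior_eq]
  exact @isClosed_closure X t1 _

theorem IjWeaklyLindelof.ijRelWeaklyLindelof {t1 t2 : TopologicalSpace X}
    (hW : IjWeaklyLindelof t1 t2) {A : Set X} (hA₁ : IsClosed[t1] A) (hA₂ : IsOpen[t2] A) :
    IjRelWeaklyLindelof t1 t2 A := by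
  intro ι U hU hAU
  let V : Option ι → Set X := fun o => o.elim Aᶜ U
  have hV : ∀ o, IsOpen[t1] (V o) := by
    rintro (_ | a)
    exacts [hA₁.isOpen_compl, hU a]
  have hVcover : ⋃ o, V o = univ := by
    rw [iUnion_option]
    exact eq_univ_of_forall fun x => (em (x ∈ A)).elim (fun hx => Or.inr (hAU hx)) Or.inl
  obtain ⟨s, hs, hdense⟩ := hW V hV hVcover
  refine ⟨some ⁻¹' s, hs.preimage (Option.some_injective ι), ?_⟩
  have hA_inter : A ∩ ⋃ o ∈ s, V o ⊆ ⋃ a ∈ some ⁻¹' s, U a := by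
    rintro x ⟨hxA, hx⟩
    obtain ⟨_ | a, ho, hxo⟩ := mem_iUnion₂.mp hx
    exacts [absurd hxA hxo, mem_biUnion ho hxo]
  calc A = A ∩ @closure X t2 (⋃ o ∈ s, V o) := by rw [hdense, inter_univ]
    _ ⊆ @closure X t2 (A ∩ ⋃ o ∈ s, V o) := @IsOpen.inter_closure X t2 _ _ hA₂
    _ ⊆ @closure X t2 (⋃ a ∈ some ⁻¹' s, U a) := @closure_mono X t2 _ _ hA_inter

theorem stmt15_general (t1 t2 : TopologicalSpace X) (hW : IjWeaklyLindelof t1 t2)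
    (A : Set X) (hrc : IjRegularClosed t1 t2 A)
    (hAopen : IsOpen[t2] A) :
    IjRelWeaklyLindelof t1 t2 A :=
  hW.ijRelWeaklyLindelof (hrc.isClosed_of_isOpen hAopen) hAopen

theorem stmt15 (t1 t2 : TopologicalSpace X) (hW : IjWeaklyLindelof t1 t2)
    (hsr : IjSemiregular t1 t2) (A : Set X) (hrc : IjRegularClosed t1 t2 A)
    (hAopen : IsOpen[t2] A) :
    IjRelWeaklyLindelof t1 t2 A :=
  stmt15_general t1 t2 hW A hrc hAopen
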